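/- arXiv:2507.16265 — 2 statements merged into one kernel-verified Lean document; each statement's English description precedes it below -/
import Mathlib

section
/- Let X, X_1, …, X_n be independent and identically distributed random variables with survival function F̄(x) = 1 for x < 0 and F̄(x) = 1/(⌊x⌋ + 2) for x ≥ 0 (the shifted discrete Pareto distribution). Then for every n ≥ 2, X ≤_st (X_1 + ⋯ + X_n)/n. -/
/-!
Fix `x ≥ 0` and put `c = n x`. The `X i` are a.s. nonnegative, so the average exceeds `x` as soon
as one of `X 1, …, X n` exceeds `c`; by independence `P(avg > x) ≥ 1 - (1 - F̄(c))ⁿ`. Writing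
`b = ⌊x⌋ + 1`, we have `⌊c⌋ + 2 ≤ n b + 1`, and Bernoulli's inequality
`(1 + 1/(n b))ⁿ ≥ 1 + 1/b` turns this into `(1 - F̄(c))ⁿ ≤ b / (b + 1) = 1 - F̄(x)`.
For `x < 0` both sides are `1`.
-/

open MeasureTheory ProbabilityTheory

lemma one_sub_one_div_mul_add_one_pow_le {n : ℕ} (hn : 0 < n) {b : ℝ} (hb : 0 < b) :
    (1 - 1 / (n * b + 1)) ^ n ≤ 1 - 1 / (b + 1) := by
  have hnb : (0 : ℝ) < n * b := by positivity
  have bernoulli : 1 + 1 / b ≤ (1 + 1 / (n * b)) ^ n := by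
    have h := one_add_mul_le_pow (a := 1 / (n * b)) (by linarith [one_div_pos.2 hnb]) n
    rwa [show (n : ℝ) * (1 / (n * b)) = 1 / b by field_simp] at h
  have hl : 1 - 1 / (n * b + 1) = (1 + 1 / (n * b))⁻¹ := by field_simp; ring
  have hr : 1 - 1 / (b + 1) = (1 + 1 / b)⁻¹ := by field_simp; ring
  rw [hl, hr, inv_pow]
  exact inv_anti₀ (by positivity) bernoulli

lemma Int.floor_natCast_mul_add_one_le {n : ℕ} (hn : 0 < n) (x : ℝ) :
    ⌊n * x⌋ + 1 ≤ n * (⌊x⌋ + 1) := by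
  rw [Int.add_one_le_iff, Int.floor_lt]
  push_cast
  exact mul_lt_mul_of_pos_left (Int.lt_floor_add_one x) (by exact_mod_cast hn)

noncomputable def discreteParetoSurvival (x : ℝ) : ℝ :=
  if x < 0 then 1 else 1 / ((⌊x⌋ : ℝ) + 2)

lemma discreteParetoSurvival_of_nonneg {x : ℝ} (hx : 0 ≤ x) :
    discreteParetoSurvival x = 1 / ((⌊x⌋ : ℝ) + 2) :=
  if_neg (not_lt.2 hx)

lemma discreteParetoSurvival_mem_Icc (x : ℝ) : discreteParetoSurvival x ∈ Set.Icc 0 1 := by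
  rcases lt_or_ge x 0 with hx | hx
  · simp [discreteParetoSurvival, hx]
  · have : (0 : ℝ) ≤ ⌊x⌋ := Int.cast_nonneg (Int.floor_nonneg.2 hx)
    rw [discreteParetoSurvival_of_nonneg hx]
    exact ⟨by positivity, by rw [div_le_one (by positivity)]; linarith⟩

lemma discreteParetoSurvival_le_one_sub_pow {n : ℕ} (hn : 0 < n) (x : ℝ) :
    discreteParetoSurvival x ≤ 1 - (1 - discreteParetoSurvival (n * x)) ^ n := by
  rcases lt_or_ge x 0 with hx | hx
  · have hnx : (n : ℝ) * x < 0 := mul_neg_of_pos_of_neg (by exact_mod_cast hn) hx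
    simp [discreteParetoSurvival, hx, hnx, hn.ne']
  set b : ℝ := ⌊x⌋ + 1 with hb
  have hb0 : 0 < b := by
    have : (0 : ℝ) ≤ ⌊x⌋ := Int.cast_nonneg (Int.floor_nonneg.2 hx)
    linarith
  have hfloor : (⌊n * x⌋ : ℝ) + 1 ≤ n * b := by
    rw [hb]; exact_mod_cast Int.floor_natCast_mul_add_one_le hn x
  have hnx : 0 ≤ (n : ℝ) * x := by positivity
  have hsurv : 1 - discreteParetoSurvival (n * x) ≤ 1 - 1 / (n * b + 1) := by
    rw [discreteParetoSurvival_of_nonneg hnx]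
    exact sub_le_sub_left (one_div_le_one_div_of_le (by positivity) (by linarith)) 1
  calc discreteParetoSurvival x = 1 - (1 - 1 / (b + 1)) := by
        rw [discreteParetoSurvival_of_nonneg hx, hb]; ring
    _ ≤ 1 - (1 - 1 / (n * b + 1)) ^ n := by
        gcongr; exact one_sub_one_div_mul_add_one_pow_le hn hb0
    _ ≤ 1 - (1 - discreteParetoSurvival (n * x)) ^ n := by
        gcongr 1 - ?_
        exact pow_le_pow_left₀ (sub_nonneg.2 (discreteParetoSurvival_mem_Icc _).2) hsurv n

namespace ProbabilityTheory

variable {Ω ι : Type*} [MeasurableSpace Ω] {P : Measure Ω}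

lemma ae_nonneg_of_measure_lt_eq_one [IsProbabilityMeasure P] {Y : Ω → ℝ} (hY : Measurable Y)
    (h : ∀ x < 0, P {ω | x < Y ω} = 1) : ∀ᵐ ω ∂P, 0 ≤ Y ω := by
  have hgt : ∀ m : ℕ, ∀ᵐ ω ∂P, -(1 / (m + 1 : ℝ)) < Y ω := fun m ↦ by
    rw [ae_iff_measure_eq (measurableSet_lt measurable_const hY).nullMeasurableSet,
      measure_univ, h _ (neg_neg_of_pos Nat.one_div_pos_of_nat)]
  filter_upwards [ae_all_iff.2 hgt] with ω hω
  by_contra! hneg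
  obtain ⟨m, hm⟩ := exists_nat_one_div_lt (neg_pos.2 hneg)
  linarith [hω m]

lemma measure_le_eq_ofReal_one_sub [IsProbabilityMeasure P] {Y : Ω → ℝ} (hY : Measurable Y)
    {c p : ℝ} (hp : 0 ≤ p) (h : P {ω | c < Y ω} = ENNReal.ofReal p) :
    P {ω | Y ω ≤ c} = ENNReal.ofReal (1 - p) := by
  rw [ENNReal.ofReal_sub _ hp, ENNReal.ofReal_one, ← h,
    ← prob_compl_eq_one_sub (measurableSet_lt measurable_const hY)]
  simp only [Set.compl_ofPred, not_lt]

variable [Fintype ι] {Y : ι → Ω → ℝ}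

lemma iIndepFun.measure_forall_le_eq_prod (hind : iIndepFun Y P) (c : ℝ) :
    P {ω | ∀ i, Y i ω ≤ c} = ∏ i, P {ω | Y i ω ≤ c} := by
  simpa only [Set.ofPred_forall] using
    hind.meas_iInter (s := fun i ↦ {ω | Y i ω ≤ c}) fun i ↦ ⟨Set.Iic c, measurableSet_Iic, rfl⟩

lemma iIndepFun.one_sub_prod_le_measure_lt_sum [IsProbabilityMeasure P] (hind : iIndepFun Y P)
    (hY : ∀ i, Measurable (Y i)) (hnonneg : ∀ i, ∀ᵐ ω ∂P, 0 ≤ Y i ω) (c : ℝ) :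
    1 - ∏ i, P {ω | Y i ω ≤ c} ≤ P {ω | c < ∑ i, Y i ω} := by
  have hmeas : MeasurableSet {ω | ∀ i, Y i ω ≤ c} := by
    rw [Set.ofPred_forall]
    exact .iInter fun i ↦ measurableSet_le (hY i) measurable_const
  have hsum : {ω | ∀ i, Y i ω ≤ c}ᶜ ≤ᵐ[P] {ω | c < ∑ i, Y i ω} := by
    filter_upwards [ae_all_iff.2 hnonneg] with ω hω (hexceeds : ω ∉ {ω | ∀ i, Y i ω ≤ c})
    obtain ⟨i, hi⟩ : ∃ i, c < Y i ω := by simpa using hexceeds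
    exact hi.trans_le (Finset.single_le_sum (fun j _ ↦ hω j) (Finset.mem_univ i))
  rw [← hind.measure_forall_le_eq_prod, ← prob_compl_eq_one_sub hmeas]
  exact measure_mono_ae hsum

end ProbabilityTheory

/-- for iid shifted discrete Pareto risks, the single risk `X = X 0` is
smaller than the average `(X_1 + ⋯ + X_n)/n` in first-order stochastic dominance,
for every `n ≥ 2`. The family `X 0, X 1, …, X n` is iid, `X 0` playing the role of
the reference risk `X`. -/
theorem discretePareto_average_dominates
    {Ω : Type*} [MeasurableSpace Ω] (P : Measure Ω) [IsProbabilityMeasure P]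
    (n : ℕ) (hn : 2 ≤ n)
    (X : Fin (n + 1) → Ω → ℝ) (hXmeas : ∀ i, Measurable (X i))
    (hIndep : iIndepFun X P)
    (hsurv : ∀ i, ∀ x : ℝ,
      P {ω | X i ω > x} =
        ENNReal.ofReal (if x < 0 then 1 else 1 / ((⌊x⌋ : ℝ) + 2))) :
    ∀ x : ℝ,
      P {ω | X 0 ω > x} ≤ P {ω | (∑ i : Fin n, X i.succ ω) / n > x} := by
  intro x
  have hn0 : 0 < n := by omega
  have hsurv' : ∀ i y, P {ω | y < X i ω} = ENNReal.ofReal (discreteParetoSurvival y) := hsurv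
  have hnonneg : ∀ i, ∀ᵐ ω ∂P, 0 ≤ X i ω := fun i ↦
    ae_nonneg_of_measure_lt_eq_one (hXmeas i) fun y hy ↦ by
      rw [hsurv', discreteParetoSurvival, if_pos hy, ENNReal.ofReal_one]
  have hcdf : ∀ i y, P {ω | X i ω ≤ y} = ENNReal.ofReal (1 - discreteParetoSurvival y) :=
    fun i y ↦ measure_le_eq_ofReal_one_sub (hXmeas i) (discreteParetoSurvival_mem_Icc y).1
      (hsurv' i y)
  have havg : {ω | (∑ i : Fin n, X i.succ ω) / n > x} =
      {ω | n * x < ∑ i : Fin n, X i.succ ω} := by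
    ext ω
    rw [Set.mem_ofPred_eq, Set.mem_ofPred_eq, gt_iff_lt,
      lt_div_iff₀ (by exact_mod_cast hn0 : (0 : ℝ) < n), mul_comm]
  calc P {ω | X 0 ω > x} = ENNReal.ofReal (discreteParetoSurvival x) := hsurv' 0 x
    _ ≤ ENNReal.ofReal (1 - (1 - discreteParetoSurvival (n * x)) ^ n) :=
        ENNReal.ofReal_le_ofReal (discreteParetoSurvival_le_one_sub_pow hn0 x)
    _ = 1 - ∏ i : Fin n, P {ω | X i.succ ω ≤ n * x} := by
        have hcdf_nonneg := sub_nonneg.2 (discreteParetoSurvival_mem_Icc (n * x)).2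
        simp only [hcdf, Finset.prod_const, Finset.card_univ, Fintype.card_fin]
        rw [← ENNReal.ofReal_pow hcdf_nonneg, ENNReal.ofReal_sub _ (pow_nonneg hcdf_nonneg n),
          ENNReal.ofReal_one]
    _ ≤ P {ω | (∑ i : Fin n, X i.succ ω) / n > x} := by
        rw [havg]
        exact (hIndep.precomp (Fin.succ_injective n)).one_sub_prod_le_measure_lt_sum
          (fun i ↦ hXmeas i.succ) (fun i ↦ hnonneg i.succ) _
end

section
/- Let X, X_1, X_2, … be independent and identically distributed random variables with the St. Petersburg survival function F̄(x) = 1 for x < 2 and F̄(x) = 2^{−⌊log₂ x⌋} for x ≥ 2. Then for every n of the form n = 2^k with k ∈ ℕ, k ≥ 1, X ≤_st (X_1 + ⋯ + X_n)/n. -/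
/-!
For an index set `T` of size `2 ^ j`, induction on `j` gives `P (y < ∑ i ∈ T, X i) ≥ 2⁻ᵐ`
whenever `y < 2 ^ (j + m + 1)`; the theorem is the case `j = k`, `y = 2 ^ k x`.
In the step, split `T` into halves with sums `S, S'`; by the case `m = 0` of the induction
hypothesis both are `≥ c = 2 ^ (j + 1)` almost surely. Then `y < S + S'` contains the disjoint
events `{y/2 < S, y/2 < S'}`, `{t < S, S' ≤ y/2}` and `{S ≤ y/2, t < S'}` with
`t = max (y/2) (y - c)`, and by independence and the hypothesis at `m` and `m + 1` their
probabilities add up to at least `a a' + (p/2)(1 - a') + (1 - a)(p/2) ≥ p` for `p = 2⁻ᵐ ≤ a, a'`.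
-/

open MeasureTheory ProbabilityTheory Filter Set

noncomputable def stPetersburgSurvival (x : ℝ) : ℝ :=
  if x < 2 then 1 else (2 : ℝ) ^ (-⌊Real.logb 2 x⌋)

lemma logb_two_lt_add_one_iff {x : ℝ} (hx : 0 < x) (m : ℕ) :
    Real.logb 2 x < m + 1 ↔ x < 2 ^ (m + 1) := by
  rw [Real.logb_lt_iff_lt_rpow one_lt_two hx]
  norm_cast

lemma inv_two_pow_le_stPetersburgSurvival {m : ℕ} {x : ℝ} (hx : x < 2 ^ (m + 1)) :
    ((2 : ℝ) ^ m)⁻¹ ≤ stPetersburgSurvival x := by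
  unfold stPetersburgSurvival
  split_ifs with h2
  · exact inv_le_one_of_one_le₀ (one_le_pow₀ one_le_two)
  · have hfloor : ⌊Real.logb 2 x⌋ < m + 1 := by
      rw [Int.floor_lt]
      push_cast
      exact (logb_two_lt_add_one_iff (by linarith) m).2 hx
    rw [← zpow_natCast, ← zpow_neg]
    exact zpow_le_zpow_right₀ one_le_two (by omega)

lemma exists_stPetersburgSurvival_eq (x : ℝ) :
    ∃ m : ℕ, x < 2 ^ (m + 1) ∧ stPetersburgSurvival x = ((2 : ℝ) ^ m)⁻¹ := by
  unfold stPetersburgSurvival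
  by_cases h2 : x < 2
  · exact ⟨0, by simpa using h2, by simp [h2]⟩
  · have hx : 0 < x := by linarith
    have hlog : (1 : ℤ) ≤ ⌊Real.logb 2 x⌋ := by
      rw [Int.le_floor, Int.cast_one, Real.le_logb_iff_rpow_le one_lt_two hx]
      simpa using h2
    lift ⌊Real.logb 2 x⌋ to ℕ using (by omega) with m hm
    refine ⟨m, (logb_two_lt_add_one_iff hx m).1 ?_, by simp [h2]⟩
    exact_mod_cast hm ▸ Int.lt_floor_add_one (Real.logb 2 x)

lemma le_mul_add_mul_one_sub_add_one_sub_mul {p a a' b b' : ℝ} (hp : 0 ≤ p)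
    (ha : p ≤ a) (ha' : p ≤ a') (hb : p / 2 ≤ b) (hb' : p / 2 ≤ b') (ha1 : a ≤ 1) (ha1' : a' ≤ 1) :
    p ≤ a * a' + b * (1 - a') + (1 - a) * b' := by
  nlinarith [mul_le_mul ha ha' hp (hp.trans ha), mul_le_mul_of_nonneg_right hb (sub_nonneg.2 ha1'),
    mul_le_mul_of_nonneg_left hb' (sub_nonneg.2 ha1)]

namespace ProbabilityTheory

variable {Ω : Type*} [MeasurableSpace Ω] {P : Measure Ω}

theorem iIndepFun.indepFun_finsetSum_of_disjoint {ι β : Type*} [AddCommMonoid β]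
    [MeasurableSpace β] [MeasurableAdd₂ β] {X : ι → Ω → β}
    (hIndep : iIndepFun X P) (hX : ∀ i, Measurable (X i)) {S T : Finset ι} (hST : Disjoint S T) :
    IndepFun (fun ω => ∑ i ∈ S, X i ω) (fun ω => ∑ i ∈ T, X i ω) P := by
  convert (hIndep.indepFun_finset S T hST hX).comp
    (Finset.measurable_sum Finset.univ fun (i : S) _ => measurable_pi_apply i)
    (Finset.measurable_sum Finset.univ fun (i : T) _ => measurable_pi_apply i) using 1 <;>
  ext ω <;> exact (Finset.sum_coe_sort _ _).symm

lemma IndepFun.measureReal_inter_preimage_eq_mul {β β' : Type*} [MeasurableSpace β]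
    [MeasurableSpace β'] {S : Ω → β} {S' : Ω → β'} (hind : IndepFun S S' P) {s : Set β}
    {s' : Set β'} (hs : MeasurableSet s) (hs' : MeasurableSet s') :
    P.real (S ⁻¹' s ∩ S' ⁻¹' s') = P.real (S ⁻¹' s) * P.real (S' ⁻¹' s') := by
  simp only [measureReal_def, hind.measure_inter_preimage_eq_mul _ _ hs hs', ENNReal.toReal_mul]

end ProbabilityTheory

section

variable {Ω : Type*} [MeasurableSpace Ω] {P : Measure Ω} [IsProbabilityMeasure P]

lemma ae_le_of_forall_lt_measureReal_eq_one {Y : Ω → ℝ} (hY : Measurable Y) {c : ℝ}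
    (h : ∀ y < c, P.real {ω | y < Y ω} = 1) : ∀ᵐ ω ∂P, c ≤ Y ω := by
  have hlt : ∀ n : ℕ, ∀ᵐ ω ∂P, c - 1 / (n + 1) < Y ω := fun n =>
    (mem_ae_iff_prob_eq_one (measurableSet_lt measurable_const hY)).2 <|
      (ENNReal.toReal_eq_one_iff _).1 (h _ (sub_lt_self c Nat.one_div_pos_of_nat))
  filter_upwards [ae_all_iff.2 hlt] with ω hω
  have hc : Tendsto (fun n : ℕ => c - 1 / (n + 1)) atTop (nhds c) := by
    simpa using (tendsto_const_nhds (x := c)).sub tendsto_one_div_add_atTop_nhds_zero_nat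
  exact le_of_tendsto' hc fun n => (hω n).le

lemma le_measureReal_lt_add_of_indepFun {S S' : Ω → ℝ} (hS : Measurable S) (hS' : Measurable S')
    (hind : IndepFun S S' P) {c y t : ℝ} (hSc : ∀ᵐ ω ∂P, c ≤ S ω) (hS'c : ∀ᵐ ω ∂P, c ≤ S' ω)
    (ht : y / 2 ≤ t) (htc : y - c ≤ t) :
    P.real {ω | y / 2 < S ω} * P.real {ω | y / 2 < S' ω}
        + P.real {ω | t < S ω} * (1 - P.real {ω | y / 2 < S' ω})
        + (1 - P.real {ω | y / 2 < S ω}) * P.real {ω | t < S' ω}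
      ≤ P.real {ω | y < S ω + S' ω} := by
  have hcompl : ∀ {f : Ω → ℝ}, Measurable f →
      P.real (f ⁻¹' Iic (y / 2)) = 1 - P.real {ω | y / 2 < f ω} := fun hf => by
    rw [← compl_Ioi, preimage_compl, probReal_compl_eq_one_sub (hf measurableSet_Ioi)]; rfl
  set A := S ⁻¹' Ioi (y / 2) ∩ S' ⁻¹' Ioi (y / 2)
  set B := S ⁻¹' Ioi t ∩ S' ⁻¹' Iic (y / 2)
  set C := S ⁻¹' Iic (y / 2) ∩ S' ⁻¹' Ioi t
  have hA : P.real A = P.real {ω | y / 2 < S ω} * P.real {ω | y / 2 < S' ω} :=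
    hind.measureReal_inter_preimage_eq_mul measurableSet_Ioi measurableSet_Ioi
  have hB : P.real B = P.real {ω | t < S ω} * (1 - P.real {ω | y / 2 < S' ω}) := by
    rw [← hcompl hS']
    exact hind.measureReal_inter_preimage_eq_mul measurableSet_Ioi measurableSet_Iic
  have hC : P.real C = (1 - P.real {ω | y / 2 < S ω}) * P.real {ω | t < S' ω} := by
    rw [← hcompl hS]
    exact hind.measureReal_inter_preimage_eq_mul measurableSet_Iic measurableSet_Ioi
  have hAB : Disjoint A B := disjoint_left.2 fun ω (hA : y / 2 < S ω ∧ y / 2 < S' ω)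
    (hB : t < S ω ∧ S' ω ≤ y / 2) => hB.2.not_gt hA.2
  have hABC : Disjoint (A ∪ B) C := disjoint_union_left.2
    ⟨disjoint_left.2 fun ω (hA : y / 2 < S ω ∧ _) (hC : S ω ≤ y / 2 ∧ _) => hC.1.not_gt hA.1,
      disjoint_left.2 fun ω (hB : t < S ω ∧ _) (hC : S ω ≤ y / 2 ∧ _) =>
        hC.1.not_gt (ht.trans_lt hB.1)⟩
  have hsub : (A ∪ B ∪ C : Set Ω) ≤ᵐ[P] {ω | y < S ω + S' ω} := by
    filter_upwards [hSc, hS'c] with ω hSω hS'ω hω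
    show y < S ω + S' ω
    rcases hω with (⟨h : y / 2 < S ω, h' : y / 2 < S' ω⟩ | ⟨h : t < S ω, -⟩) |
      ⟨-, h' : t < S' ω⟩ <;> linarith
  calc _ = P.real (A ∪ B ∪ C) := by
        rw [measureReal_union hABC ((hS measurableSet_Iic).inter (hS' measurableSet_Ioi)),
          measureReal_union hAB ((hS measurableSet_Ioi).inter (hS' measurableSet_Iic)), hA, hB, hC]
    _ ≤ _ := ENNReal.toReal_mono (measure_ne_top _ _) (measure_mono_ae hsub)

theorem inv_two_pow_le_measureReal_lt_sum {ι : Type*} {X : ι → Ω → ℝ}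
    (hX : ∀ i, Measurable (X i)) (hIndep : iIndepFun X P)
    (htail : ∀ i (m : ℕ) (y : ℝ), y < 2 ^ (m + 1) → ((2 : ℝ) ^ m)⁻¹ ≤ P.real {ω | y < X i ω})
    (j : ℕ) {T : Finset ι} (hT : T.card = 2 ^ j) (m : ℕ) {y : ℝ} (hy : y < 2 ^ (j + m + 1)) :
    ((2 : ℝ) ^ m)⁻¹ ≤ P.real {ω | y < ∑ i ∈ T, X i ω} := by
  induction j generalizing T m y with
  | zero =>
    obtain ⟨i, rfl⟩ := Finset.card_eq_one.1 hT
    simpa using htail i m y (by simpa using hy)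
  | succ j ih =>
    classical
    obtain ⟨T₁, hT₁T, hT₁⟩ :=
      T.exists_subset_card_eq (show 2 ^ j ≤ T.card by rw [hT, pow_succ]; omega)
    have hT₂ : (T \ T₁).card = 2 ^ j := by
      rw [Finset.card_sdiff_of_subset hT₁T, hT, hT₁, pow_succ]; omega
    have hmeas : ∀ U : Finset ι, Measurable fun ω => ∑ i ∈ U, X i ω :=
      fun U => Finset.measurable_sum U fun i _ => hX i
    have hlower : ∀ {U : Finset ι}, U.card = 2 ^ j → ∀ᵐ ω ∂P, 2 ^ (j + 1) ≤ ∑ i ∈ U, X i ω :=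
      fun hU => ae_le_of_forall_lt_measureReal_eq_one (hmeas _) fun y hy =>
        le_antisymm measureReal_le_one (by simpa using ih hU 0 (by simpa using hy))
    have hhalf : y / 2 < 2 ^ (j + m + 1) := by
      rw [div_lt_iff₀ two_pos]; exact hy.trans_eq (by ring)
    have hmax : max (y / 2) (y - 2 ^ (j + 1)) < 2 ^ (j + (m + 1) + 1) := by
      refine max_lt (hhalf.trans_le (pow_le_pow_right₀ one_le_two (by omega))) ?_
      exact (sub_lt_self y (by positivity)).trans (hy.trans_eq (by ring))
    have hinv : ((2 : ℝ) ^ (m + 1))⁻¹ = (2 ^ m)⁻¹ / 2 := by rw [pow_succ, mul_inv, div_eq_mul_inv]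
    calc ((2 : ℝ) ^ m)⁻¹
        ≤ _ := le_mul_add_mul_one_sub_add_one_sub_mul (by positivity) (ih hT₁ m hhalf)
          (ih hT₂ m hhalf) (hinv ▸ ih hT₁ (m + 1) hmax) (hinv ▸ ih hT₂ (m + 1) hmax)
          measureReal_le_one measureReal_le_one
      _ ≤ _ := le_measureReal_lt_add_of_indepFun (hmeas _) (hmeas _)
          (hIndep.indepFun_finsetSum_of_disjoint hX Finset.disjoint_sdiff) (hlower hT₁)
          (hlower hT₂) (le_max_left _ _) (le_max_right _ _)
      _ = _ := by simp only [add_comm (∑ i ∈ T₁, _), Finset.sum_sdiff hT₁T]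

end

theorem stPetersburg_average_dominates_general
    {Ω : Type*} [MeasurableSpace Ω] (P : Measure Ω) [IsProbabilityMeasure P]
    (X : ℕ → Ω → ℝ) (hXmeas : ∀ i, Measurable (X i))
    (hIndep : iIndepFun X P)
    (hsurv : ∀ i, ∀ x : ℝ,
      P {ω | X i ω > x} =
        ENNReal.ofReal (if x < 2 then 1 else (2 : ℝ) ^ (-⌊Real.logb 2 x⌋)))
    (k : ℕ) :
    ∀ x : ℝ,
      P {ω | X 0 ω > x} ≤
        P {ω | (∑ i ∈ Finset.range (2 ^ k), X (i + 1) ω) / (2 ^ k : ℝ) > x} := by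
  intro x
  obtain ⟨m, hxm, hF⟩ := exists_stPetersburgSurvival_eq x
  have htail : ∀ i (m : ℕ) (y : ℝ), y < 2 ^ (m + 1) →
      ((2 : ℝ) ^ m)⁻¹ ≤ P.real {ω | y < X (i + 1) ω} := fun i m y hy => by
    rw [measureReal_def, hsurv (i + 1) y, ENNReal.toReal_ofReal']
    exact le_max_of_le_left (inv_two_pow_le_stPetersburgSurvival hy)
  have hsum := inv_two_pow_le_measureReal_lt_sum (fun i => hXmeas (i + 1))
    (hIndep.precomp (add_left_injective 1)) htail k (Finset.card_range _) m
    (y := x * 2 ^ k) ((mul_lt_mul_of_pos_right hxm (by positivity)).trans_eq (by ring))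
  rw [hsurv 0 x, ← stPetersburgSurvival, hF, ← ofReal_measureReal]
  refine ENNReal.ofReal_le_ofReal (hsum.trans_eq (congrArg P.real ?_))
  ext ω
  exact (lt_div_iff₀ (by positivity : (0 : ℝ) < 2 ^ k)).symm

/-- for an iid sequence of St. Petersburg lotteries, the single lottery
`X = X 0` is smaller than the average of the first `n = 2^k` copies
`(X 1 + ⋯ + X n)/n` in first-order stochastic dominance, for every `k ≥ 1`. -/
theorem stPetersburg_average_dominates
    {Ω : Type*} [MeasurableSpace Ω] (P : Measure Ω) [IsProbabilityMeasure P]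
    (X : ℕ → Ω → ℝ) (hXmeas : ∀ i, Measurable (X i))
    (hIndep : iIndepFun X P)
    (hsurv : ∀ i, ∀ x : ℝ,
      P {ω | X i ω > x} =
        ENNReal.ofReal (if x < 2 then 1 else (2 : ℝ) ^ (-⌊Real.logb 2 x⌋)))
    (k : ℕ) (hk : 1 ≤ k) :
    ∀ x : ℝ,
      P {ω | X 0 ω > x} ≤
        P {ω | (∑ i ∈ Finset.range (2 ^ k), X (i + 1) ω) / (2 ^ k : ℝ) > x} :=
  stPetersburg_average_dominates_general P X hXmeas hIndep hsurv k
end
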